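/- arXiv:2405.10623 — 4 statements merged into one kernel-verified Lean document; each statement's English description precedes it below -/
import Mathlib

section
/- Suppose that for every time t ∈ ℕ the iterate satisfies θ_{t+1} = proj_Θ(θ_t − α_t g_t) with θ_0 ∈ Θ, where ∇J_t(θ_t) = c_t g_t with ε ≤ c_t ≤ G and ‖g_t‖ ≤ G, the step sizes are α_0 = 1 and α_t = t^{−μ_1} for t ≥ 1 with μ_1 ∈ (0,1) and μ_1 < μ_2, the minimizer drift satisfies ‖θ*_{t+1} − θ*_t‖ ≤ M_0 t^{−μ_2} for all t > τ, and the sequence t ↦ c_{t+1}/α_{t+1} − c_t/α_t changes sign at most N times (i.e., there are at most N indices t with (c_{t+1}/α_{t+1} − c_t/α_t)(c_{t+2}/α_{t+2} − c_{t+1}/α_{t+1}) < 0). Then there exist M > 0 and T_0 ∈ ℕ such that for all t_f ≥ T_0 the regret satisfies ∑_{t=0}^{t_f} (J_t(θ_t) − J_t(θ*_t)) ≤ M · t_f^{μ*}, where μ* = max{μ_1, 1 − μ_1, 1 + μ_1 − μ_2}. -/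
open Finset in
/-- Sum of `(t+1)^q` for `q ∈ (-1,0)` is bounded by `n^(q+1)/(q+1)`. -/
lemma aux_sum_rpow_le {q : ℝ} (hq0 : -1 < q) (hq1 : q < 0) (n : ℕ) :
    ∑ t ∈ Finset.range n, ((t : ℝ) + 1) ^ q ≤ (n : ℝ) ^ (q + 1) / (q + 1) := by
  have hp0 : 0 < q + 1 := by linarith
  induction n with
  | zero => simp [Real.zero_rpow hp0.ne']
  | succ n ih =>
    rw [Finset.sum_range_succ]
    have ht1 : (1:ℝ) ≤ (n:ℝ) + 1 := le_add_of_nonneg_left (Nat.cast_nonneg n)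
    have ht0 : (0:ℝ) < (n:ℝ) + 1 := by positivity
    set t : ℝ := (n:ℝ) + 1 with htdef
    -- Bernoulli : (1 - 1/t)^(q+1) ≤ 1 - (q+1)/t
    have hs : (-1:ℝ) ≤ -(1/t) := by
      have : 1/t ≤ 1 := by
        rw [div_le_one ht0]; exact ht1
      linarith
    have hbern := rpow_one_add_le_one_add_mul_self hs hp0.le (by linarith : q + 1 ≤ 1)
    have hpow_pos : (0:ℝ) < t ^ (q+1) := Real.rpow_pos_of_pos ht0 _
    have hmul := mul_le_mul_of_nonneg_left hbern hpow_pos.le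
    have h3 : t ^ (q+1) * (1 + -(1/t)) ^ (q+1) = (n:ℝ) ^ (q+1) := by
      rw [← Real.mul_rpow ht0.le (by linarith : (0:ℝ) ≤ 1 + -(1/t))]
      congr 1
      field_simp
      rw [htdef]; ring
    have htq : t ^ (q+1) = t ^ q * t := Real.rpow_add_one ht0.ne' q
    have h4 : t ^ (q+1) * (1 + (q+1) * -(1/t)) = t ^ (q+1) - (q+1) * t ^ q := by
      rw [htq]
      field_simp
      ring
    rw [h3, h4] at hmul
    -- hmul : (n:ℝ)^(q+1) ≤ t^(q+1) - (q+1) * t^q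
    have key : (n:ℝ) ^ (q+1) / (q+1) + t ^ q ≤ t ^ (q+1) / (q+1) := by
      rw [div_add' _ _ _ hp0.ne', div_le_div_iff₀ hp0 hp0]
      nlinarith [hmul]
    have hcast : ((n+1 : ℕ) : ℝ) = t := by push_cast; rfl
    rw [hcast]
    linarith [ih, key]

open InnerProductSpace in
/-- Gradient inequality for convex differentiable functions. -/
lemma aux_grad_ineq {m : ℕ} {f : EuclideanSpace ℝ (Fin m) → ℝ}
    (hconv : ConvexOn ℝ Set.univ f) (hdiff : Differentiable ℝ f)
    (x y : EuclideanSpace ℝ (Fin m)) :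
    f x - f y ≤ inner ℝ (gradient f x) (x - y) := by
  have hfd : HasFDerivAt f (toDual ℝ _ (gradient f x)) x :=
    hasGradientAt_iff_hasFDerivAt.1 (hdiff x).hasGradientAt
  set γ : ℝ → EuclideanSpace ℝ (Fin m) := fun s => y + s • (x - y) with hγdef
  have hγ1 : γ 1 = x := by simp [hγdef]
  have hγd : HasDerivAt γ (x - y) 1 := by
    simpa [hγdef] using ((hasDerivAt_id (1:ℝ)).smul_const (x - y)).const_add y
  have hφd : HasDerivAt (f ∘ γ) ((inner ℝ (gradient f x) (x - y) : ℝ)) 1 := by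
    have hfd' : HasFDerivAt f (toDual ℝ _ (gradient f x)) (γ 1) := by rw [hγ1]; exact hfd
    have := hfd'.comp_hasDerivAt 1 hγd
    simpa only [toDual_apply_apply] using this
  have hφc : ConvexOn ℝ Set.univ (f ∘ γ) := by
    have h := hconv.comp_affineMap (AffineMap.lineMap y x)
    rw [Set.preimage_univ] at h
    have : f ∘ γ = f ∘ (AffineMap.lineMap y x) := by
      funext s
      simp [hγdef, AffineMap.lineMap_apply, add_comm]
    rw [this]
    exact h
  have hslope := hφc.slope_le_of_hasDerivAt (Set.mem_univ (0:ℝ)) (Set.mem_univ 1)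
    one_pos hφd
  have hsl : slope (f ∘ γ) 0 1 = f x - f y := by
    rw [slope_def_field]
    simp [hγdef]
  rw [hsl] at hslope
  exact hslope

set_option maxHeartbeats 1000000 in
/-- Regret bound for online projected gradient descent with
time-varying gradient scalings `c t` and drifting minimizers. -/
theorem regret_bound_online_gradient_descent {m : ℕ}
    (Θ : Set (EuclideanSpace ℝ (Fin m)))
    (hne : Θ.Nonempty) (hcl : IsClosed Θ) (hconv : Convex ℝ Θ)
    (hbd : Bornology.IsBounded Θ)
    (proj : EuclideanSpace ℝ (Fin m) → EuclideanSpace ℝ (Fin m))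
    (hproj : ∀ x, proj x ∈ Θ ∧ ∀ y ∈ Θ, dist x (proj x) ≤ dist x y)
    (J : ℕ → EuclideanSpace ℝ (Fin m) → ℝ)
    (hJconv : ∀ t, ConvexOn ℝ Set.univ (J t))
    (hJdiff : ∀ t, Differentiable ℝ (J t))
    (θstar : ℕ → EuclideanSpace ℝ (Fin m))
    (hθstar : ∀ t, θstar t ∈ Θ ∧ ∀ y ∈ Θ, J t (θstar t) ≤ J t y)
    (ε G M₀ : ℝ) (τ N : ℕ) (μ₁ μ₂ : ℝ)
    (hε : 0 < ε) (hG : 0 < G) (hM₀ : 0 < M₀)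
    (hμ₁ : μ₁ ∈ Set.Ioo (0:ℝ) 1) (hμ₁₂ : μ₁ < μ₂)
    (θ g : ℕ → EuclideanSpace ℝ (Fin m)) (c α : ℕ → ℝ)
    (hα0 : α 0 = 1) (hα : ∀ t : ℕ, 1 ≤ t → α t = (t:ℝ) ^ (-μ₁))
    (hθ0 : θ 0 ∈ Θ)
    (hstep : ∀ t : ℕ, θ (t+1) = proj (θ t - α t • g t))
    (hgrad : ∀ t : ℕ, gradient (J t) (θ t) = c t • g t)
    (hc : ∀ t : ℕ, ε ≤ c t ∧ c t ≤ G)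
    (hgbd : ∀ t : ℕ, ‖g t‖ ≤ G)
    (hdrift : ∀ t : ℕ, τ < t → ‖θstar (t+1) - θstar t‖ ≤ M₀ * (t:ℝ) ^ (-μ₂))
    (hsign : {t : ℕ | (c (t+1) / α (t+1) - c t / α t) *
        (c (t+2) / α (t+2) - c (t+1) / α (t+1)) < 0}.encard ≤ (N : ℕ∞)) :
    ∃ M > (0:ℝ), ∃ T₀ : ℕ, ∀ tf : ℕ, T₀ ≤ tf →
      ∑ t ∈ Finset.range (tf+1), (J t (θ t) - J t (θstar t)) ≤
        M * (tf:ℝ) ^ (max μ₁ (max (1 - μ₁) (1 + μ₁ - μ₂))) := by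
  classical
  obtain ⟨z, hz⟩ := hne
  obtain ⟨r, hr⟩ := (Metric.isBounded_iff_subset_closedBall z).1 hbd
  set D : ℝ := 2 * r with hDdef
  have hDnorm : ∀ x ∈ Θ, ∀ y ∈ Θ, ‖x - y‖ ≤ D := by
    intro x hx y hy
    have h1 : dist x z ≤ r := Metric.mem_closedBall.1 (hr hx)
    have h2 : dist y z ≤ r := Metric.mem_closedBall.1 (hr hy)
    calc ‖x - y‖ = dist x y := (dist_eq_norm x y).symm
      _ ≤ dist x z + dist z y := dist_triangle _ _ _
      _ ≤ r + r := by rw [dist_comm z y]; exact add_le_add h1 h2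
      _ = D := by rw [hDdef]; ring
  have hD0 : 0 ≤ D := le_trans (norm_nonneg (z - z)) (hDnorm z hz z hz)
  set μs := max μ₁ (max (1 - μ₁) (1 + μ₁ - μ₂)) with hμsdef
  obtain ⟨hμ₁0, hμ₁1⟩ := hμ₁
  have hμs_ge1 : 1 - μ₁ ≤ μs := le_max_of_le_right (le_max_left _ _)
  have hμs_ge2 : μ₁ ≤ μs := le_max_left _ _
  have hμs_ge3 : 1 + μ₁ - μ₂ ≤ μs := le_max_of_le_right (le_max_right _ _)
  have hμs0 : 0 < μs := lt_of_lt_of_le (by linarith) hμs_ge1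
  have hμs1 : μs < 1 := by
    rw [hμsdef]
    exact max_lt hμ₁1 (max_lt (by linarith) (by linarith))
  have hθΘ : ∀ t, θ t ∈ Θ := by
    intro t
    cases t with
    | zero => exact hθ0
    | succ n => rw [hstep n]; exact (hproj _).1
  -- projection variational inequality and contraction
  haveI : Nonempty Θ := ⟨⟨z, hz⟩⟩
  have hvar : ∀ x, ∀ w ∈ Θ, (inner ℝ (x - proj x) (w - proj x) : ℝ) ≤ 0 := by
    intro x
    have hbdd : BddBelow (Set.range (fun w : Θ => ‖x - (w : EuclideanSpace ℝ (Fin m))‖)) :=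
      ⟨0, fun b hb => by obtain ⟨w, rfl⟩ := hb; exact norm_nonneg _⟩
    have hinf : ‖x - proj x‖ = ⨅ w : Θ, ‖x - (w : EuclideanSpace ℝ (Fin m))‖ := by
      apply le_antisymm
      · exact le_ciInf fun w => by
          simpa [dist_eq_norm] using (hproj x).2 w w.2
      · exact ciInf_le hbdd ⟨proj x, (hproj x).1⟩
    exact (norm_eq_iInf_iff_real_inner_le_zero hconv (hproj x).1).1 hinf
  have hcontr : ∀ x, ∀ y ∈ Θ, ‖proj x - y‖^2 ≤ ‖x - y‖^2 := by
    intro x y hy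
    have h1 := hvar x y hy
    have h2 : x - y = (x - proj x) + (proj x - y) := by abel
    have h3 : ‖x - y‖^2 = ‖x - proj x‖^2 + 2 * inner ℝ (x - proj x) (proj x - y) + ‖proj x - y‖^2 := by
      rw [h2]; exact norm_add_sq_real _ _
    have h4 : (inner ℝ (x - proj x) (proj x - y) : ℝ) = - inner ℝ (x - proj x) (y - proj x) := by
      rw [← inner_neg_right, neg_sub]
    nlinarith [sq_nonneg ‖x - proj x‖]
  set s : ℕ → ℝ := fun t => ‖θ t - θstar t‖^2 with hsdef
  set d : ℕ → ℝ := fun t => ‖θstar (t+1) - θstar t‖ with hddef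
  set β : ℕ → ℝ := fun t => G / (2 * α t) with hβdef
  have hαpos : ∀ t, 0 < α t := by
    intro t
    cases t with
    | zero => rw [hα0]; norm_num
    | succ n =>
      rw [hα (n+1) (by omega)]
      have : (0:ℝ) < ((n+1 : ℕ) : ℝ) := by positivity
      exact Real.rpow_pos_of_pos this _
  have hβpos : ∀ t, 0 < β t := fun t => by
    simp only [hβdef]
    exact div_pos hG (by linarith [hαpos t])
  have hαanti : ∀ t, α (t+1) ≤ α t := by
    intro t
    cases t with
    | zero =>
      rw [hα0, hα 1 le_rfl]
      norm_num
    | succ n =>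
      rw [hα (n+1) (by omega), hα (n+2) (by omega)]
      apply Real.rpow_le_rpow_of_nonpos (by positivity) (by push_cast; linarith) (by linarith)
  have hβmono : ∀ t, β t ≤ β (t+1) := by
    intro t
    simp only [hβdef]
    have h1 := hαpos t
    have h2 := hαpos (t+1)
    have h3 := hαanti t
    gcongr
  have hβval : ∀ t : ℕ, 1 ≤ t → β t = (G/2) * (t:ℝ)^μ₁ := by
    intro t ht
    have htpos : (0:ℝ) < (t:ℝ) := by exact_mod_cast ht
    have hrp : (0:ℝ) < (t:ℝ)^μ₁ := Real.rpow_pos_of_pos htpos _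
    simp only [hβdef]
    rw [hα t ht, Real.rpow_neg htpos.le]
    field_simp
  -- per-step key inequality
  have hkey : ∀ t, J t (θ t) - J t (θstar t) ≤
      β t * (s t - s (t+1)) + 3 * D * (β t * d t) + G^3/2 * α t := by
    intro t
    have hr0 : 0 ≤ J t (θ t) - J t (θstar t) :=
      sub_nonneg.2 ((hθstar t).2 (θ t) (hθΘ t))
    have hgi : J t (θ t) - J t (θstar t) ≤ inner ℝ (gradient (J t) (θ t)) (θ t - θstar t) :=
      aux_grad_ineq (hJconv t) (hJdiff t) _ _
    rw [hgrad t, real_inner_smul_left] at hgi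
    set I : ℝ := inner ℝ (g t) (θ t - θstar t) with hIdef
    have hcpos : 0 < c t := lt_of_lt_of_le hε (hc t).1
    have hI0 : 0 ≤ I := by nlinarith [hgi, hr0, hcpos]
    have hrGI : J t (θ t) - J t (θstar t) ≤ G * I :=
      hgi.trans (mul_le_mul_of_nonneg_right (hc t).2 hI0)
    have hαt := hαpos t
    have hx : θ t - α t • g t - θstar t = (θ t - θstar t) - α t • g t := by abel
    have hnorm : ‖θ t - α t • g t - θstar t‖^2
        = s t - 2 * α t * I + α t^2 * ‖g t‖^2 := by
      rw [hx, norm_sub_sq_real, real_inner_smul_right, real_inner_comm, norm_smul,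
        Real.norm_eq_abs, abs_of_pos hαt, mul_pow]
      simp only [hsdef, hIdef]
      ring
    have hc1 : ‖θ (t+1) - θstar t‖^2 ≤ ‖θ t - α t • g t - θstar t‖^2 := by
      rw [hstep t]; exact hcontr _ _ (hθstar t).1
    have htri : ‖θ (t+1) - θstar (t+1)‖ ≤ ‖θ (t+1) - θstar t‖ + d t := by
      have heq : θ (t+1) - θstar (t+1) = (θ (t+1) - θstar t) - (θstar (t+1) - θstar t) := by abel
      simp only [hddef]
      rw [heq]
      exact norm_sub_le _ _
    have hb : ‖θ (t+1) - θstar t‖ ≤ D := hDnorm _ (hθΘ (t+1)) _ (hθstar t).1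
    have hdD : d t ≤ D := hDnorm _ (hθstar (t+1)).1 _ (hθstar t).1
    have hd0 : 0 ≤ d t := norm_nonneg _
    have hg2 : ‖g t‖^2 ≤ G^2 := by nlinarith [hgbd t, norm_nonneg (g t)]
    have h0 : 0 ≤ ‖θ (t+1) - θstar (t+1)‖ := norm_nonneg _
    have p1 : ‖θ (t+1) - θstar (t+1)‖^2 ≤ (‖θ (t+1) - θstar t‖ + d t)^2 :=
      pow_le_pow_left₀ h0 htri 2
    have p2 : α t^2 * ‖g t‖^2 ≤ α t^2 * G^2 :=
      mul_le_mul_of_nonneg_left hg2 (sq_nonneg _)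
    have hdesc : 2 * α t * I ≤ s t - s (t+1) + 3*D*d t + α t^2*G^2 := by
      have hst1 : s (t+1) = ‖θ (t+1) - θstar (t+1)‖^2 := by simp only [hsdef]
      rw [hst1]
      nlinarith [p1, p2, hnorm, hc1, hb, hdD, hd0, norm_nonneg (θ (t+1) - θstar t)]
    have hβα : β t * (2 * α t) = G := by
      simp only [hβdef]
      field_simp
    have hr2 : J t (θ t) - J t (θstar t) ≤ β t * (2 * α t * I) := by
      rw [show β t * (2 * α t * I) = (β t * (2 * α t)) * I by ring, hβα]
      exact hrGI
    have hr3 : β t * (2 * α t * I) ≤ β t * (s t - s (t+1) + 3*D*d t + α t^2*G^2) := by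
      apply mul_le_mul_of_nonneg_left _ (hβpos t).le
      linarith [hdesc]
    have hr4 : β t * (s t - s (t+1) + 3*D*d t + α t^2*G^2)
        = β t * (s t - s (t+1)) + 3*D*(β t * d t) + β t * (α t^2*G^2) := by ring
    have hβαsq : β t * (α t^2 * G^2) = G^3/2 * α t := by
      simp only [hβdef]
      field_simp
    linarith [hr2, hr3, hr4.le, hβαsq.le, hβαsq.ge, hr4.ge]
  -- basic facts about s and d
  have hs0 : ∀ t, 0 ≤ s t := fun t => by simp only [hsdef]; positivity
  have hsD : ∀ t, s t ≤ D^2 := fun t => by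
    have h := hDnorm _ (hθΘ t) _ (hθstar t).1
    simp only [hsdef]
    nlinarith [norm_nonneg (θ t - θstar t)]
  have hdD : ∀ t, d t ≤ D := fun t => hDnorm _ (hθstar (t+1)).1 _ (hθstar t).1
  have hd0 : ∀ t, 0 ≤ d t := fun t => norm_nonneg _
  -- telescoping bound
  have hS1 : ∀ n : ℕ, ∑ t ∈ Finset.range (n+1), β t * (s t - s (t+1)) ≤ β n * (D^2 - s (n+1)) := by
    intro n
    induction n with
    | zero =>
      rw [Finset.sum_range_one]
      apply mul_le_mul_of_nonneg_left _ (hβpos 0).le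
      linarith [hsD 0]
    | succ n ih =>
      rw [Finset.sum_range_succ]
      have h1 := hβmono n
      have h2 := hsD (n+1)
      have h3 := hs0 (n+2)
      nlinarith [ih, mul_nonneg (sub_nonneg.2 h1) (sub_nonneg.2 h2)]
  -- constants
  set Cτ : ℝ := (G/2) * ((τ:ℝ)+1)^μ₁ * D with hCτdef
  have hCτ0 : 0 ≤ Cτ := by
    simp only [hCτdef]
    positivity
  set M : ℝ := G*D^2/2 + 3*D*((G/2)*D + (τ:ℝ)*Cτ + (G/2)*M₀/μs) + G^3/2*(1 + 1/μs) + 1 with hMdef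
  have hMpos : 0 < M := by
    have h1 : (0:ℝ) ≤ G*D^2/2 := by positivity
    have h2 : (0:ℝ) ≤ (G/2)*D := by positivity
    have h3 : (0:ℝ) ≤ (τ:ℝ)*Cτ := mul_nonneg (Nat.cast_nonneg τ) hCτ0
    have h4 : (0:ℝ) ≤ (G/2)*M₀/μs := by positivity
    have h5 : (0:ℝ) ≤ G^3/2*(1 + 1/μs) := by positivity
    have h6 : (0:ℝ) ≤ 3*D*((G/2)*D + (τ:ℝ)*Cτ + (G/2)*M₀/μs) := by
      apply mul_nonneg (by linarith)
      linarith
    rw [hMdef]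
    linarith
  refine ⟨M, hMpos, 1, ?_⟩
  intro tf htf
  have htf1 : (1:ℝ) ≤ (tf:ℝ) := by exact_mod_cast htf
  have hX1 : (1:ℝ) ≤ (tf:ℝ)^μs := Real.one_le_rpow htf1 hμs0.le
  have hX0 : (0:ℝ) < (tf:ℝ)^μs := by linarith
  -- the rpow sum bound
  have hq0 : (-1:ℝ) < μs - 1 := by linarith
  have hq1 : μs - 1 < 0 := by linarith
  have hsum_rpow : ∑ t ∈ Finset.range tf, ((t : ℝ) + 1) ^ (μs - 1) ≤ (tf:ℝ)^μs / μs := by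
    have h := aux_sum_rpow_le hq0 hq1 tf
    have he : μs - 1 + 1 = μs := by ring
    rwa [he] at h
  -- Sum 1
  have hβtf : β tf ≤ (G/2) * (tf:ℝ)^μs := by
    rw [hβval tf (by omega)]
    apply mul_le_mul_of_nonneg_left _ (by linarith)
    exact Real.rpow_le_rpow_of_exponent_le htf1 hμs_ge2
  have hB1 : ∑ t ∈ Finset.range (tf+1), β t * (s t - s (t+1)) ≤ G*D^2/2 * (tf:ℝ)^μs := by
    refine le_trans (hS1 tf) ?_
    have h1 : β tf * (D^2 - s (tf+1)) ≤ β tf * D^2 :=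
      mul_le_mul_of_nonneg_left (by linarith [hs0 (tf+1)]) (hβpos tf).le
    have h2 : β tf * D^2 ≤ (G/2)*(tf:ℝ)^μs * D^2 :=
      mul_le_mul_of_nonneg_right hβtf (sq_nonneg D)
    have h3 : (G/2)*(tf:ℝ)^μs * D^2 = G*D^2/2 * (tf:ℝ)^μs := by ring
    linarith
  -- Sum 2 pointwise
  have hβd : ∀ t : ℕ, β (t+1) * d (t+1) ≤
      (if t + 1 ≤ τ then Cτ else 0) + (G/2)*M₀ * ((t:ℝ)+1)^(μs-1) := by
    intro t
    have hβv := hβval (t+1) (by omega)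
    have hcast : ((t+1:ℕ):ℝ) = (t:ℝ)+1 := by push_cast; ring
    have htp0 : (0:ℝ) < (t:ℝ)+1 := by positivity
    by_cases hcase : t + 1 ≤ τ
    · rw [if_pos hcase]
      have h1 : β (t+1) ≤ (G/2) * ((τ:ℝ)+1)^μ₁ := by
        rw [hβv, hcast]
        apply mul_le_mul_of_nonneg_left _ (by linarith : (0:ℝ) ≤ G/2)
        apply Real.rpow_le_rpow (by positivity) _ hμ₁0.le
        have : (t:ℝ)+1 ≤ (τ:ℝ) := by exact_mod_cast hcase
        linarith
      have hβnn : 0 ≤ β (t+1) := (hβpos (t+1)).le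
      have h2 := mul_le_mul h1 (hdD (t+1)) (hd0 (t+1)) (by positivity)
      have h3 : (0:ℝ) ≤ (G/2)*M₀ * ((t:ℝ)+1)^(μs-1) := by positivity
      simp only [hCτdef]
      linarith
    · rw [if_neg hcase]
      have hτlt : τ < t+1 := by omega
      have hdd := hdrift (t+1) hτlt
      have hdd2 : d (t+1) ≤ M₀ * ((t:ℝ)+1)^(-μ₂) := by
        simp only [hddef]
        rw [← hcast]
        exact hdd
      have h1 : β (t+1) * d (t+1) ≤ ((G/2) * ((t:ℝ)+1)^μ₁) * (M₀ * ((t:ℝ)+1)^(-μ₂)) := by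
        rw [hβv, hcast]
        exact mul_le_mul le_rfl hdd2 (hd0 (t+1)) (by positivity)
      have h2 : ((G/2) * ((t:ℝ)+1)^μ₁) * (M₀ * ((t:ℝ)+1)^(-μ₂))
          = (G/2)*M₀ * ((t:ℝ)+1)^(μ₁-μ₂) := by
        rw [show ((G/2) * ((t:ℝ)+1)^μ₁) * (M₀ * ((t:ℝ)+1)^(-μ₂))
          = (G/2)*M₀*(((t:ℝ)+1)^μ₁ * ((t:ℝ)+1)^(-μ₂)) by ring,
          ← Real.rpow_add htp0, show μ₁ + -μ₂ = μ₁ - μ₂ by ring]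
      have h3 : ((t:ℝ)+1)^(μ₁-μ₂) ≤ ((t:ℝ)+1)^(μs-1) :=
        Real.rpow_le_rpow_of_exponent_le (by linarith [Nat.cast_nonneg (α := ℝ) t]) (by linarith)
      have h4 : (G/2)*M₀ * ((t:ℝ)+1)^(μ₁-μ₂) ≤ (G/2)*M₀ * ((t:ℝ)+1)^(μs-1) :=
        mul_le_mul_of_nonneg_left h3 (by positivity)
      linarith
  -- Sum 2
  have hB2 : ∑ t ∈ Finset.range (tf+1), β t * d t ≤
      (G/2)*D + (τ:ℝ)*Cτ + (G/2)*M₀*((tf:ℝ)^μs/μs) := by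
    rw [Finset.sum_range_succ']
    have h0 : β 0 * d 0 ≤ (G/2)*D := by
      have hb0 : β 0 = G/2 := by simp only [hβdef]; rw [hα0]; norm_num
      rw [hb0]
      exact mul_le_mul_of_nonneg_left (hdD 0) (by linarith)
    have hsum := Finset.sum_le_sum (fun i (_ : i ∈ Finset.range tf) => hβd i)
    rw [Finset.sum_add_distrib] at hsum
    have hite : ∑ t ∈ Finset.range tf, (if t + 1 ≤ τ then Cτ else 0) ≤ (τ:ℝ) * Cτ := by
      have hrw : ∀ t : ℕ, (if t + 1 ≤ τ then Cτ else 0) = (if t ∈ Finset.range τ then Cτ else 0) := by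
        intro t
        congr 1
        simp only [Finset.mem_range, Nat.lt_iff_add_one_le]
      rw [Finset.sum_congr rfl (fun t _ => hrw t), Finset.sum_ite_mem, Finset.sum_const]
      have hcard : (Finset.range tf ∩ Finset.range τ).card ≤ τ :=
        le_trans (Finset.card_le_card Finset.inter_subset_right) (le_of_eq (Finset.card_range τ))
      calc ((Finset.range tf ∩ Finset.range τ).card : ℕ) • Cτ
          = ((Finset.range tf ∩ Finset.range τ).card : ℝ) * Cτ := nsmul_eq_mul _ _
        _ ≤ (τ:ℝ) * Cτ := mul_le_mul_of_nonneg_right (by exact_mod_cast hcard) hCτ0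
    have hp2 : ∑ t ∈ Finset.range tf, (G/2)*M₀ * ((t:ℝ)+1)^(μs-1) ≤ (G/2)*M₀*((tf:ℝ)^μs/μs) := by
      rw [← Finset.mul_sum]
      exact mul_le_mul_of_nonneg_left hsum_rpow (by positivity)
    linarith
  -- Sum 3
  have hB3 : ∑ t ∈ Finset.range (tf+1), G^3/2 * α t ≤ G^3/2 * (1 + (tf:ℝ)^μs/μs) := by
    rw [← Finset.mul_sum]
    apply mul_le_mul_of_nonneg_left _ (by positivity)
    rw [Finset.sum_range_succ', hα0]
    have hpt : ∀ t : ℕ, t ∈ Finset.range tf → α (t+1) ≤ ((t:ℝ)+1)^(μs-1) := by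
      intro t _
      rw [hα (t+1) (by omega)]
      have hcast : ((t+1:ℕ):ℝ) = (t:ℝ)+1 := by push_cast; ring
      rw [hcast]
      exact Real.rpow_le_rpow_of_exponent_le (by linarith [Nat.cast_nonneg (α := ℝ) t])
        (by linarith)
    calc (∑ t ∈ Finset.range tf, α (t+1)) + 1
        ≤ (∑ t ∈ Finset.range tf, ((t:ℝ)+1)^(μs-1)) + 1 :=
          add_le_add_left (Finset.sum_le_sum hpt) 1
      _ ≤ (tf:ℝ)^μs/μs + 1 := add_le_add_left hsum_rpow 1
      _ = 1 + (tf:ℝ)^μs/μs := by ring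
  -- combine
  have hsum_key := Finset.sum_le_sum (fun t (_ : t ∈ Finset.range (tf+1)) => hkey t)
  rw [Finset.sum_add_distrib, Finset.sum_add_distrib] at hsum_key
  have hfac : ∑ t ∈ Finset.range (tf+1), 3*D*(β t * d t)
      = 3*D * ∑ t ∈ Finset.range (tf+1), β t * d t := by rw [Finset.mul_sum]
  rw [hfac] at hsum_key
  have hB2' : 3*D * (∑ t ∈ Finset.range (tf+1), β t * d t) ≤
      3*D*((G/2)*D + (τ:ℝ)*Cτ + (G/2)*M₀*((tf:ℝ)^μs/μs)) :=
    mul_le_mul_of_nonneg_left hB2 (by linarith)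
  -- bound everything by constants times (tf)^μs using 1 ≤ (tf)^μs
  have hc1 : (0:ℝ) ≤ (G/2)*D + (τ:ℝ)*Cτ := by
    have : (0:ℝ) ≤ (τ:ℝ)*Cτ := mul_nonneg (Nat.cast_nonneg τ) hCτ0
    have : (0:ℝ) ≤ (G/2)*D := by positivity
    linarith [mul_nonneg (Nat.cast_nonneg (α := ℝ) τ) hCτ0]
  have hfinal2 : 3*D*((G/2)*D + (τ:ℝ)*Cτ + (G/2)*M₀*((tf:ℝ)^μs/μs)) ≤
      3*D*((G/2)*D + (τ:ℝ)*Cτ + (G/2)*M₀/μs) * (tf:ℝ)^μs := by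
    have hD3 : (0:ℝ) ≤ 3*D := by linarith
    have e1 : 3*D*((G/2)*D + (τ:ℝ)*Cτ + (G/2)*M₀/μs) * (tf:ℝ)^μs
        = 3*D*(((G/2)*D + (τ:ℝ)*Cτ)*(tf:ℝ)^μs + (G/2)*M₀*((tf:ℝ)^μs/μs)) := by
      field_simp
    rw [e1]
    apply mul_le_mul_of_nonneg_left _ hD3
    have h5 : (G/2)*D + (τ:ℝ)*Cτ ≤ ((G/2)*D + (τ:ℝ)*Cτ)*(tf:ℝ)^μs := by
      nlinarith [hc1, hX1]
    linarith
  have hfinal3 : G^3/2 * (1 + (tf:ℝ)^μs/μs) ≤ G^3/2*(1 + 1/μs) * (tf:ℝ)^μs := by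
    have hG3 : (0:ℝ) ≤ G^3/2 := by positivity
    have e1 : G^3/2*(1 + 1/μs) * (tf:ℝ)^μs = G^3/2 * ((tf:ℝ)^μs + (tf:ℝ)^μs/μs) := by
      field_simp
    rw [e1]
    apply mul_le_mul_of_nonneg_left _ hG3
    linarith
  have htotal : ∑ t ∈ Finset.range (tf+1), (J t (θ t) - J t (θstar t)) ≤
      (G*D^2/2 + 3*D*((G/2)*D + (τ:ℝ)*Cτ + (G/2)*M₀/μs) + G^3/2*(1 + 1/μs)) * (tf:ℝ)^μs := by
    have := hsum_key
    nlinarith [hB1, hB2', hfinal2, hfinal3, hB3, hsum_key]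
  have hMX : (G*D^2/2 + 3*D*((G/2)*D + (τ:ℝ)*Cτ + (G/2)*M₀/μs) + G^3/2*(1 + 1/μs)) * (tf:ℝ)^μs
      ≤ M * (tf:ℝ)^μs := by
    apply mul_le_mul_of_nonneg_right _ hX0.le
    rw [hMdef]
    linarith
  exact le_trans htotal hMX
end

section
/- Suppose that for every time t ∈ ℕ the iterate satisfies θ_{t+1} = proj_Θ(θ_t − α_t g_t) with θ_0 ∈ Θ, where ∇J_t(θ_t) = c_t g_t with ε ≤ c_t ≤ G and ‖g_t‖ ≤ G, the step sizes are α_0 = 1 and α_t = t^{−1/2} for t ≥ 1, the minimizer drift satisfies ‖θ*_{t+1} − θ*_t‖ ≤ M_0 t^{−μ_2} for all t > τ with μ_2 ≥ 1, and the sequence t ↦ c_{t+1}/α_{t+1} − c_t/α_t changes sign at most N times. Then there exist M > 0 and T_0 ∈ ℕ such that for all t_f ≥ T_0 the regret satisfies ∑_{t=0}^{t_f} (J_t(θ_t) − J_t(θ*_t)) ≤ M · √t_f. -/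
open Finset in
lemma aux_tele {a w : ℕ → ℝ} {B : ℝ} (haB : ∀ t, a t ≤ B)
    (ha0 : ∀ t, 0 ≤ a t) (hwmono : Monotone w) (hw0 : 0 ≤ w 0) :
    ∀ n, ∑ t ∈ range (n+1), (a t - a (t+1)) * w t ≤ (B - a (n+1)) * w n := by
  intro n
  induction n with
  | zero =>
      rw [show (0:ℕ)+1 = 1 from rfl, Finset.sum_range_one]
      nlinarith [haB 0, ha0 1]
  | succ n ih =>
      rw [Finset.sum_range_succ]
      have h1 : w n ≤ w (n+1) := hwmono (Nat.le_succ n)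
      have h2 : 0 ≤ w n := le_trans hw0 (hwmono (Nat.zero_le n))
      nlinarith [haB (n+1), ha0 (n+2), ha0 (n+1)]

lemma aux_sqrt_sum : ∀ n : ℕ, ∑ t ∈ Finset.range n, (Real.sqrt (t+1))⁻¹ ≤ 2 * Real.sqrt n := by
  intro n
  induction n with
  | zero => simp
  | succ n ih =>
      rw [Finset.sum_range_succ]
      have hb : (0:ℝ) < Real.sqrt ((n:ℝ)+1) := Real.sqrt_pos.2 (by positivity)
      have ha : (0:ℝ) ≤ Real.sqrt n := Real.sqrt_nonneg n
      have h1 : Real.sqrt n ^ 2 = n := Real.sq_sqrt (by positivity)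
      have h2 : Real.sqrt ((n:ℝ)+1) ^ 2 = (n:ℝ)+1 := Real.sq_sqrt (by positivity)
      have key : (Real.sqrt ((n:ℝ)+1))⁻¹ ≤ 2 * Real.sqrt ((n:ℝ)+1) - 2 * Real.sqrt n := by
        rw [inv_eq_one_div, div_le_iff₀ hb]
        nlinarith [sq_nonneg (Real.sqrt ((n:ℝ)+1) - Real.sqrt n)]
      push_cast
      linarith [ih, key]

lemma aux_convex_grad {E : Type*} [NormedAddCommGroup E] [InnerProductSpace ℝ E]
    [CompleteSpace E]
    {f : E → ℝ} (hconv : ConvexOn ℝ Set.univ f) (hd : Differentiable ℝ f) (x y : E) :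
    f x - f y ≤ inner ℝ (gradient f x) (x - y) := by
  have hgrad : HasFDerivAt f (InnerProductSpace.toDual ℝ E (gradient f x)) x :=
    (hd x).hasGradientAt
  have hcurve : HasDerivAt (fun s : ℝ => x + s • (y - x)) (y - x) 0 := by
    simpa using ((hasDerivAt_id (0:ℝ)).smul_const (y - x)).const_add x
  have h0 : x + (0:ℝ) • (y - x) = x := by simp
  have hφ : HasDerivAt (fun s : ℝ => f (x + s • (y - x)))
      (inner ℝ (gradient f x) (y - x) : ℝ) 0 := by
    have := HasFDerivAt.comp_hasDerivAt (0:ℝ) (h0 ▸ hgrad) hcurve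
    simp only [InnerProductSpace.toDual_apply_apply, h0] at this
    exact this
  have hφconv : ConvexOn ℝ Set.univ (fun s : ℝ => f (x + s • (y - x))) := by
    have h := hconv.comp_affineMap (AffineMap.lineMap x y)
    have heq : (f ∘ (AffineMap.lineMap x y)) = fun s : ℝ => f (x + s • (y - x)) := by
      funext s
      simp only [Function.comp_apply, AffineMap.lineMap_apply, vsub_eq_sub, vadd_eq_add]
      rw [add_comm]
    rw [heq] at h
    simpa using h
  have hs := hφconv.le_slope_of_hasDerivAt (Set.mem_univ (0:ℝ)) (Set.mem_univ (1:ℝ))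
    zero_lt_one hφ
  rw [slope_def_field] at hs
  simp [-inner_gradient_left] at hs
  have : (inner ℝ (gradient f x) (x - y) : ℝ) = - inner ℝ (gradient f x) (y - x) := by
    rw [show x - y = -(y - x) by abel, inner_neg_right]
  rw [this]
  linarith

lemma aux_proj_contract {E : Type*} [NormedAddCommGroup E] [InnerProductSpace ℝ E]
    {K : Set E} (hK : Convex ℝ K) {x p y : E} (hp : p ∈ K) (hy : y ∈ K)
    (hmin : ∀ w ∈ K, dist x p ≤ dist x w) :
    ‖p - y‖ ≤ ‖x - y‖ := by
  have hinf : ‖x - p‖ = ⨅ w : K, ‖x - w‖ := by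
    letI : Nonempty K := ⟨⟨p, hp⟩⟩
    apply le_antisymm
    · exact le_ciInf fun w => by simpa [dist_eq_norm] using hmin w w.2
    · exact ciInf_le ⟨0, fun b hb => by obtain ⟨w, rfl⟩ := hb; positivity⟩ (⟨p, hp⟩ : K)
  have hvar := (norm_eq_iInf_iff_real_inner_le_zero hK hp).1 hinf y hy
  have hexp : ‖x - y‖^2 = ‖x - p‖^2 + 2 * inner ℝ (x - p) (p - y) + ‖p - y‖^2 := by
    have := norm_add_sq_real (x - p) (p - y)
    rw [show (x - p) + (p - y) = x - y by abel] at this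
    linarith [this]
  have hip : (0:ℝ) ≤ inner ℝ (x - p) (p - y) := by
    have h2 : (inner ℝ (x - p) (p - y) : ℝ) = - inner ℝ (x - p) (y - p) := by
      rw [show p - y = -(y - p) by abel, inner_neg_right]
    linarith [hvar, h2.le, h2.ge]
  nlinarith [norm_nonneg (x - p), norm_nonneg (p - y), norm_nonneg (x - y)]

set_option maxHeartbeats 1000000 in
/-- `O(√t_f)` regret for online projected gradient descent with
step sizes `α_t = t^(-1/2)` when the minimizer drift decays at rate `μ₂ ≥ 1`. -/
theorem regret_bound_online_gradient_descent_sqrt {m : ℕ}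
    (Θ : Set (EuclideanSpace ℝ (Fin m)))
    (hne : Θ.Nonempty) (hcl : IsClosed Θ) (hconv : Convex ℝ Θ)
    (hbd : Bornology.IsBounded Θ)
    (proj : EuclideanSpace ℝ (Fin m) → EuclideanSpace ℝ (Fin m))
    (hproj : ∀ x, proj x ∈ Θ ∧ ∀ y ∈ Θ, dist x (proj x) ≤ dist x y)
    (J : ℕ → EuclideanSpace ℝ (Fin m) → ℝ)
    (hJconv : ∀ t, ConvexOn ℝ Set.univ (J t))
    (hJdiff : ∀ t, Differentiable ℝ (J t))
    (θstar : ℕ → EuclideanSpace ℝ (Fin m))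
    (hθstar : ∀ t, θstar t ∈ Θ ∧ ∀ y ∈ Θ, J t (θstar t) ≤ J t y)
    (ε G M₀ : ℝ) (τ N : ℕ) (μ₂ : ℝ)
    (hε : 0 < ε) (hG : 0 < G) (hM₀ : 0 < M₀) (hμ₂ : 1 ≤ μ₂)
    (θ g : ℕ → EuclideanSpace ℝ (Fin m)) (c α : ℕ → ℝ)
    (hα0 : α 0 = 1) (hα : ∀ t : ℕ, 1 ≤ t → α t = (t:ℝ) ^ (-(1/2) : ℝ))
    (hθ0 : θ 0 ∈ Θ)
    (hstep : ∀ t : ℕ, θ (t+1) = proj (θ t - α t • g t))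
    (hgrad : ∀ t : ℕ, gradient (J t) (θ t) = c t • g t)
    (hc : ∀ t : ℕ, ε ≤ c t ∧ c t ≤ G)
    (hgbd : ∀ t : ℕ, ‖g t‖ ≤ G)
    (hdrift : ∀ t : ℕ, τ < t → ‖θstar (t+1) - θstar t‖ ≤ M₀ * (t:ℝ) ^ (-μ₂))
    (hsign : {t : ℕ | (c (t+1) / α (t+1) - c t / α t) *
        (c (t+2) / α (t+2) - c (t+1) / α (t+1)) < 0}.encard ≤ (N : ℕ∞)) :
    ∃ M > (0:ℝ), ∃ T₀ : ℕ, ∀ tf : ℕ, T₀ ≤ tf →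
      ∑ t ∈ Finset.range (tf+1), (J t (θ t) - J t (θstar t)) ≤
        M * Real.sqrt (tf:ℝ) := by
  classical
  set D : ℝ := Metric.diam Θ with hDdef
  have hDnn : 0 ≤ D := Metric.diam_nonneg
  have hdistD : ∀ x ∈ Θ, ∀ y ∈ Θ, ‖x - y‖ ≤ D := fun x hx y hy => by
    rw [← dist_eq_norm]; exact Metric.dist_le_diam_of_mem hbd hx hy
  have hθmem : ∀ t, θ t ∈ Θ := by
    intro t
    induction t with
    | zero => exact hθ0
    | succ n _ => rw [hstep n]; exact (hproj _).1
  -- step sizes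
  have hαs : ∀ t : ℕ, 1 ≤ t → α t = (Real.sqrt t)⁻¹ := by
    intro t ht
    rw [hα t ht, Real.rpow_neg (by positivity), Real.sqrt_eq_rpow]
  have hαpos : ∀ t, 0 < α t := by
    intro t
    rcases Nat.eq_zero_or_pos t with h | h
    · rw [h, hα0]; norm_num
    · rw [hαs t h]
      have : (0:ℝ) < Real.sqrt t := Real.sqrt_pos.2 (by exact_mod_cast h)
      positivity
  set W : ℕ → ℝ := fun t => (2 * α t)⁻¹ with hWdef
  have hW0 : W 0 = 1/2 := by simp [hWdef, hα0]
  have hWs : ∀ t : ℕ, 1 ≤ t → W t = Real.sqrt t / 2 := by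
    intro t ht
    have hsp : (0:ℝ) < Real.sqrt t := Real.sqrt_pos.2 (by exact_mod_cast ht)
    simp only [hWdef]
    rw [hαs t ht]
    field_simp
  have hWnn : ∀ t, 0 ≤ W t := fun t => by
    have := hαpos t
    simp only [hWdef]
    positivity
  have hWmono : Monotone W := by
    apply monotone_nat_of_le_succ
    intro n
    rcases Nat.eq_zero_or_pos n with h | h
    · subst h
      rw [hW0, hWs 1 le_rfl]
      simp
    · rw [hWs n h, hWs (n+1) (le_trans h (Nat.le_succ n))]
      have h2 : Real.sqrt (n:ℝ) ≤ Real.sqrt (((n+1:ℕ)):ℝ) :=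
        Real.sqrt_le_sqrt (by push_cast; linarith)
      linarith
  -- abbreviations
  set A : ℕ → ℝ := fun t => ‖θ t - θstar t‖^2 with hAdef
  set d : ℕ → ℝ := fun t => ‖θstar (t+1) - θstar t‖ with hddef
  set I : ℕ → ℝ := fun t => (inner ℝ (g t) (θ t - θstar t) : ℝ) with hIdef
  set r : ℕ → ℝ := fun t => J t (θ t) - J t (θstar t) with hrdef
  have hAnn : ∀ t, 0 ≤ A t := fun t => sq_nonneg _
  have hAD : ∀ t, A t ≤ D^2 := by
    intro t
    have h1 : ‖θ t - θstar t‖ ≤ D := hdistD _ (hθmem t) _ (hθstar t).1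
    have h2 : (0:ℝ) ≤ ‖θ t - θstar t‖ := norm_nonneg _
    simp only [hAdef]
    nlinarith
  have hdnn : ∀ t, 0 ≤ d t := fun t => norm_nonneg _
  have hdD : ∀ t, d t ≤ D := fun t => hdistD _ (hθstar (t+1)).1 _ (hθstar t).1
  have hrnn : ∀ t, 0 ≤ r t := fun t => sub_nonneg.2 ((hθstar t).2 (θ t) (hθmem t))
  have hrle : ∀ t, r t ≤ c t * I t := by
    intro t
    have h := aux_convex_grad (hJconv t) (hJdiff t) (θ t) (θstar t)
    rw [hgrad t, real_inner_smul_left] at h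
    exact h
  have hInn : ∀ t, 0 ≤ I t := by
    intro t
    by_contra h
    push_neg at h
    have hcpos : 0 < c t := lt_of_lt_of_le hε (hc t).1
    nlinarith [hrnn t, hrle t]
  have hrG : ∀ t, r t ≤ G * I t := fun t =>
    (hrle t).trans (mul_le_mul_of_nonneg_right (hc t).2 (hInn t))
  -- descent
  have hdesc : ∀ t, ‖θ (t+1) - θstar t‖^2 ≤ A t - 2 * α t * I t + α t^2 * G^2 := by
    intro t
    have hcontr : ‖θ (t+1) - θstar t‖ ≤ ‖(θ t - α t • g t) - θstar t‖ := by
      rw [hstep t]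
      exact aux_proj_contract hconv (hproj (θ t - α t • g t)).1 (hθstar t).1
        (fun w hw => (hproj (θ t - α t • g t)).2 w hw)
    have hexp : ‖(θ t - α t • g t) - θstar t‖^2
        = A t - 2 * (α t * I t) + α t^2 * ‖g t‖^2 := by
      have h1 := norm_sub_sq_real (θ t - θstar t) (α t • g t)
      rw [show θ t - θstar t - α t • g t = (θ t - α t • g t) - θstar t by abel] at h1
      rw [h1, real_inner_smul_right, real_inner_comm, norm_smul]
      simp only [hAdef, hIdef, Real.norm_eq_abs]
      rw [mul_pow, sq_abs]
      try ring
    have hg2 : ‖g t‖^2 ≤ G^2 := by nlinarith [hgbd t, norm_nonneg (g t)]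
    have hα2 : (0:ℝ) ≤ α t ^ 2 := sq_nonneg _
    have hsq : ‖θ (t+1) - θstar t‖^2 ≤ ‖(θ t - α t • g t) - θstar t‖^2 := by
      nlinarith [norm_nonneg (θ (t+1) - θstar t), norm_nonneg ((θ t - α t • g t) - θstar t)]
    rw [hexp] at hsq
    nlinarith
  have hAsucc : ∀ t, A (t+1) ≤ ‖θ (t+1) - θstar t‖^2 + 3 * D * d t := by
    intro t
    have htri : ‖θ (t+1) - θstar (t+1)‖ ≤ ‖θ (t+1) - θstar t‖ + d t := by
      have h : θ (t+1) - θstar (t+1) = (θ (t+1) - θstar t) - (θstar (t+1) - θstar t) := by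
        abel
      rw [h]
      exact norm_sub_le _ _
    have hb : ‖θ (t+1) - θstar t‖ ≤ D := hdistD _ (hθmem _) _ (hθstar t).1
    simp only [hAdef]
    nlinarith [norm_nonneg (θ (t+1) - θstar (t+1)), norm_nonneg (θ (t+1) - θstar t),
      hdnn t, hdD t]
  have hIbound : ∀ t, I t ≤ (A t - A (t+1)) * W t + 3*D*(d t * W t) + α t * (G^2/2) := by
    intro t
    have hαp := hαpos t
    have h2 : 2 * α t * I t ≤ A t - A (t+1) + 3*D*(d t) + α t^2*G^2 := by
      linarith [hdesc t, hAsucc t]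
    have hWt : W t = (2 * α t)⁻¹ := rfl
    have h3 : I t = (2 * α t * I t) * W t := by
      rw [hWt]; field_simp
    rw [h3]
    have h4 : (2 * α t * I t) * W t ≤ (A t - A (t+1) + 3*D*(d t) + α t^2*G^2) * W t :=
      mul_le_mul_of_nonneg_right h2 (hWnn t)
    refine h4.trans (le_of_eq ?_)
    rw [hWt]
    field_simp
  -- sum bounds
  set Cτ : ℝ := D * (Real.sqrt τ + 1) / 2 with hCτdef
  have hCτnn : 0 ≤ Cτ := by
    have := Real.sqrt_nonneg (τ:ℝ)
    simp only [hCτdef]; positivity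
  set u : ℕ → ℝ := fun t => (if t ≤ τ then Cτ else 0) + (M₀/2) * (Real.sqrt t)⁻¹ with hudef
  have hdW : ∀ t, d t * W t ≤ u t := by
    intro t
    simp only [hudef]
    by_cases ht : t ≤ τ
    · rw [if_pos ht]
      have hWτ : W t ≤ (Real.sqrt τ + 1)/2 := by
        rcases Nat.eq_zero_or_pos t with h | h
        · rw [h, hW0]
          have := Real.sqrt_nonneg (τ:ℝ); linarith
        · rw [hWs t h]
          have : Real.sqrt t ≤ Real.sqrt τ := by
            apply Real.sqrt_le_sqrt; exact_mod_cast ht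
          linarith
      have h1 : d t * W t ≤ D * ((Real.sqrt τ + 1)/2) :=
        mul_le_mul (hdD t) hWτ (hWnn t) hDnn
      have h2 : (0:ℝ) ≤ (M₀/2) * (Real.sqrt t)⁻¹ := by
        have := Real.sqrt_nonneg (t:ℝ); positivity
      simp only [hCτdef]
      linarith
    · rw [if_neg ht]
      push_neg at ht
      have ht1 : 1 ≤ t := le_trans (Nat.one_le_iff_ne_zero.2 (by omega)) le_rfl
      have htR : (1:ℝ) ≤ (t:ℝ) := by exact_mod_cast ht1
      have hsp : (0:ℝ) < Real.sqrt t := Real.sqrt_pos.2 (by linarith)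
      have hsq : Real.sqrt t ^ 2 = (t:ℝ) := Real.sq_sqrt (by linarith)
      have hd1 : d t ≤ M₀ * (t:ℝ)⁻¹ := by
        have h1 := hdrift t ht
        have h2 : (t:ℝ) ^ (-μ₂) ≤ (t:ℝ) ^ (-(1:ℝ)) :=
          Real.rpow_le_rpow_of_exponent_le htR (by linarith)
        rw [Real.rpow_neg_one] at h2
        calc d t ≤ M₀ * (t:ℝ) ^ (-μ₂) := h1
          _ ≤ M₀ * (t:ℝ)⁻¹ := by nlinarith
      have hWt : W t = Real.sqrt t / 2 := hWs t ht1
      have hmul : d t * W t ≤ (M₀ * (t:ℝ)⁻¹) * W t :=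
        mul_le_mul_of_nonneg_right hd1 (hWnn t)
      refine hmul.trans (le_of_eq ?_)
      rw [hWt, ← hsq]
      have hne : Real.sqrt (t:ℝ) ≠ 0 := ne_of_gt hsp
      field_simp
      rw [Real.sqrt_sq hsp.le]
      linear_combination
  -- the existence
  refine ⟨G*(D^2/2 + 3*D*M₀ + G^2) + G*(3*D*(((τ:ℝ)+1)*Cτ) + G^2/2) + 1, by positivity, 1, ?_⟩
  intro tf htf
  set s : ℝ := Real.sqrt tf with hsdef
  have hs1 : (1:ℝ) ≤ s := by
    rw [hsdef, show (1:ℝ) = Real.sqrt 1 by simp]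
    apply Real.sqrt_le_sqrt
    exact_mod_cast htf
  have hs0 : (0:ℝ) ≤ s := by linarith
  -- term 1
  have hT1 : ∑ t ∈ Finset.range (tf+1), (A t - A (t+1)) * W t ≤ D^2 * (s/2) := by
    have h1 := aux_tele hAD hAnn hWmono (hWnn 0) tf
    have h2 : (D^2 - A (tf+1)) * W tf ≤ D^2 * W tf := by
      nlinarith [hAnn (tf+1), hWnn tf]
    have h3 : W tf = s/2 := by rw [hWs tf htf, hsdef]
    rw [h3] at h1 h2
    linarith
  -- term 2
  have hsumu : ∑ t ∈ Finset.range (tf+1), u t ≤ ((τ:ℝ)+1)*Cτ + (M₀/2) * (2*s) := by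
    simp only [hudef]
    rw [Finset.sum_add_distrib]
    have hif : ∑ t ∈ Finset.range (tf+1), (if t ≤ τ then Cτ else 0) ≤ ((τ:ℝ)+1)*Cτ := by
      rw [← Finset.sum_filter]
      rw [Finset.sum_const, nsmul_eq_mul]
      have hcard : ((Finset.range (tf+1)).filter (fun t => t ≤ τ)).card ≤ τ + 1 := by
        have hsub : (Finset.range (tf+1)).filter (fun t => t ≤ τ) ⊆ Finset.range (τ+1) := by
          intro x hx
          simp only [Finset.mem_filter, Finset.mem_range] at hx ⊢
          omega
        calc _ ≤ (Finset.range (τ+1)).card := Finset.card_le_card hsub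
          _ = τ + 1 := Finset.card_range _
      have : (((Finset.range (tf+1)).filter (fun t => t ≤ τ)).card : ℝ) ≤ (τ:ℝ)+1 := by
        exact_mod_cast hcard
      exact mul_le_mul_of_nonneg_right this hCτnn
    have hinv : ∑ t ∈ Finset.range (tf+1), (M₀/2) * (Real.sqrt t)⁻¹ ≤ (M₀/2) * (2*s) := by
      rw [← Finset.mul_sum]
      apply mul_le_mul_of_nonneg_left _ (by positivity)
      rw [Finset.sum_range_succ']
      simp only [Nat.cast_zero, Real.sqrt_zero, inv_zero, add_zero]
      rw [hsdef]
      refine le_trans (le_of_eq ?_) (aux_sqrt_sum tf)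
      apply Finset.sum_congr rfl
      intro t _
      push_cast
      try ring_nf
    linarith
  have hT2 : ∑ t ∈ Finset.range (tf+1), d t * W t ≤ ((τ:ℝ)+1)*Cτ + M₀*s := by
    calc ∑ t ∈ Finset.range (tf+1), d t * W t ≤ ∑ t ∈ Finset.range (tf+1), u t :=
          Finset.sum_le_sum (fun t _ => hdW t)
      _ ≤ ((τ:ℝ)+1)*Cτ + (M₀/2) * (2*s) := hsumu
      _ = ((τ:ℝ)+1)*Cτ + M₀*s := by ring
  -- term 3
  have hT3 : ∑ t ∈ Finset.range (tf+1), α t ≤ 1 + 2*s := by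
    rw [Finset.sum_range_succ']
    rw [hα0]
    have hterm : ∀ t : ℕ, α (t+1) = (Real.sqrt ((t:ℕ)+1 : ℕ))⁻¹ := by
      intro t
      rw [hαs (t+1) (Nat.le_add_left 1 t)]
      try norm_cast
    have : ∑ t ∈ Finset.range tf, α (t+1) ≤ 2*s := by
      rw [hsdef]
      refine le_trans (le_of_eq ?_) (aux_sqrt_sum tf)
      apply Finset.sum_congr rfl
      intro t _
      rw [hterm t]
      try norm_cast
    linarith
  -- combine
  have hrsum : ∑ t ∈ Finset.range (tf+1), r t
      ≤ G * (D^2 * (s/2) + 3*D*(((τ:ℝ)+1)*Cτ + M₀*s) + (G^2/2)*(1 + 2*s)) := by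
    have step1 : ∑ t ∈ Finset.range (tf+1), r t ≤ G * ∑ t ∈ Finset.range (tf+1), I t := by
      rw [Finset.mul_sum]
      exact Finset.sum_le_sum (fun t _ => hrG t)
    have step2 : ∑ t ∈ Finset.range (tf+1), I t
        ≤ D^2 * (s/2) + 3*D*(((τ:ℝ)+1)*Cτ + M₀*s) + (G^2/2)*(1 + 2*s) := by
      have h1 : ∑ t ∈ Finset.range (tf+1), I t
          ≤ ∑ t ∈ Finset.range (tf+1), ((A t - A (t+1)) * W t + 3*D*(d t * W t)
            + α t * (G^2/2)) :=
        Finset.sum_le_sum (fun t _ => hIbound t)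
      rw [Finset.sum_add_distrib, Finset.sum_add_distrib] at h1
      have h2 : ∑ t ∈ Finset.range (tf+1), 3*D*(d t * W t)
          ≤ 3*D*(((τ:ℝ)+1)*Cτ + M₀*s) := by
        rw [← Finset.mul_sum]
        exact mul_le_mul_of_nonneg_left hT2 (by positivity)
      have h3 : ∑ t ∈ Finset.range (tf+1), α t * (G^2/2) ≤ (G^2/2)*(1 + 2*s) := by
        have : ∑ t ∈ Finset.range (tf+1), α t * (G^2/2)
            = (∑ t ∈ Finset.range (tf+1), α t) * (G^2/2) := by
          rw [← Finset.sum_mul]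
        rw [this]
        calc (∑ t ∈ Finset.range (tf+1), α t) * (G^2/2) ≤ (1 + 2*s) * (G^2/2) :=
              mul_le_mul_of_nonneg_right hT3 (by positivity)
          _ = (G^2/2)*(1 + 2*s) := by ring
      linarith
    calc ∑ t ∈ Finset.range (tf+1), r t ≤ G * ∑ t ∈ Finset.range (tf+1), I t := step1
      _ ≤ _ := mul_le_mul_of_nonneg_left step2 (le_of_lt hG)
  have hfinal : G * (D^2 * (s/2) + 3*D*(((τ:ℝ)+1)*Cτ + M₀*s) + (G^2/2)*(1 + 2*s))
      ≤ (G*(D^2/2 + 3*D*M₀ + G^2) + G*(3*D*(((τ:ℝ)+1)*Cτ) + G^2/2) + 1) * s := by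
    have hB : (0:ℝ) ≤ G*(3*D*(((τ:ℝ)+1)*Cτ) + G^2/2) := by positivity
    nlinarith [mul_le_mul_of_nonneg_left hs1 hB, hs0]
  have : ∑ t ∈ Finset.range (tf+1), r t
      ≤ (G*(D^2/2 + 3*D*M₀ + G^2) + G*(3*D*(((τ:ℝ)+1)*Cτ) + G^2/2) + 1) * s :=
    hrsum.trans hfinal
  simpa [hrdef, hsdef] using this
end

section
/- Let J : ℝ^m → ℝ be convex and differentiable, let θ*, θ*' ∈ Θ (the minimizer and the shifted comparator), let θ ∈ ℝ^m, let c > 0 and α > 0, and let g ∈ ℝ^m satisfy ∇J(θ) = c · g. Set θ⁺ = proj_Θ(θ − α g) and ε = ‖θ*' − θ*‖. Then J(θ) − J(θ*) ≤ (α/(2c)) ‖∇J(θ)‖² + (c/(2α)) (‖θ − θ*‖² − ‖θ⁺ − θ*'‖²) + (c/(2α)) (ε² + 2 ε ‖θ⁺ − θ*‖). -/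
open Set

lemma convex_grad_ineq {m : ℕ} (J : EuclideanSpace ℝ (Fin m) → ℝ)
    (hJconv : ConvexOn ℝ Set.univ J) (hJdiff : Differentiable ℝ J)
    (x y : EuclideanSpace ℝ (Fin m)) :
    inner ℝ (gradient J x) (y - x) ≤ J y - J x := by
  set f : ℝ → ℝ := fun t => J (x + t • (y - x)) with hf
  have hline : ∀ t : ℝ, HasDerivAt (fun t : ℝ => x + t • (y - x)) (y - x) t := by
    intro t
    simpa using ((hasDerivAt_id t).smul_const (y - x)).const_add x
  have hGrad : HasFDerivAt J ((InnerProductSpace.toDual ℝ _) (gradient J x)) x :=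
    (hJdiff x).hasGradientAt.hasFDerivAt
  have hderiv : HasDerivAt f (inner ℝ (gradient J x) (y - x) : ℝ) 0 := by
    have h0 : x + (0:ℝ) • (y - x) = x := by simp
    have := (h0 ▸ hGrad).comp_hasDerivAt 0 (hline 0)
    simp at this ⊢
    exact this
  have hconvf : ConvexOn ℝ Set.univ f := by
    have := hJconv.comp_affineMap (AffineMap.lineMap x y)
    have heq : f = J ∘ (AffineMap.lineMap x y) := by
      funext t
      simp [hf, AffineMap.lineMap_apply]
      congr 1
      module
    rw [heq]
    simpa using this
  have := hconvf.le_slope_of_hasDerivAt (mem_univ (0:ℝ)) (mem_univ (1:ℝ)) one_pos hderiv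
  have hs : slope f 0 1 = J y - J x := by
    simp [slope_def_field, hf]
  linarith [hs ▸ this]

lemma proj_firm {m : ℕ} (Θ : Set (EuclideanSpace ℝ (Fin m)))
    (hconv : Convex ℝ Θ)
    (proj : EuclideanSpace ℝ (Fin m) → EuclideanSpace ℝ (Fin m))
    (hproj : ∀ x, proj x ∈ Θ ∧ ∀ y ∈ Θ, dist x (proj x) ≤ dist x y)
    (x y : EuclideanSpace ℝ (Fin m)) (hy : y ∈ Θ) :
    ‖proj x - y‖ ≤ ‖x - y‖ := by
  have hmem := (hproj x).1
  have hinf : ‖x - proj x‖ = ⨅ w : Θ, ‖x - w‖ := by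
    haveI : Nonempty Θ := ⟨⟨_, hmem⟩⟩
    apply le_antisymm
    · exact le_ciInf fun w => by
        simpa [dist_eq_norm] using (hproj x).2 w w.2
    · exact ciInf_le ⟨0, fun _ ⟨w, hw⟩ => hw ▸ norm_nonneg _⟩ (⟨_, hmem⟩ : Θ)
  have hineq := (norm_eq_iInf_iff_real_inner_le_zero hconv hmem).mp hinf y hy
  have hsq : ‖x - y‖ ^ 2 = ‖x - proj x‖ ^ 2 + 2 * inner ℝ (x - proj x) (proj x - y) + ‖proj x - y‖ ^ 2 := by
    have : x - y = (x - proj x) + (proj x - y) := by abel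
    rw [this, norm_add_sq_real]
  have h2 : (0:ℝ) ≤ inner ℝ (x - proj x) (proj x - y) := by
    have : (proj x - y) = -(y - proj x) := by abel
    rw [this, inner_neg_right]
    linarith
  have := sq_nonneg ‖x - proj x‖
  have hfinal : ‖proj x - y‖ ^ 2 ≤ ‖x - y‖ ^ 2 := by nlinarith
  nlinarith [norm_nonneg (proj x - y), norm_nonneg (x - y)]

/-- Per-step regret bound with a shifted comparator. -/
theorem per_step_regret_bound_shifted_comparator {m : ℕ}
    (Θ : Set (EuclideanSpace ℝ (Fin m)))
    (hne : Θ.Nonempty) (hcl : IsClosed Θ) (hconv : Convex ℝ Θ)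
    (proj : EuclideanSpace ℝ (Fin m) → EuclideanSpace ℝ (Fin m))
    (hproj : ∀ x, proj x ∈ Θ ∧ ∀ y ∈ Θ, dist x (proj x) ≤ dist x y)
    (J : EuclideanSpace ℝ (Fin m) → ℝ)
    (hJconv : ConvexOn ℝ Set.univ J) (hJdiff : Differentiable ℝ J)
    (θstar θstar' : EuclideanSpace ℝ (Fin m))
    (hθstar : θstar ∈ Θ) (hθstar' : θstar' ∈ Θ)
    (θ g : EuclideanSpace ℝ (Fin m)) (c α : ℝ)
    (hc : 0 < c) (hα : 0 < α)
    (hgrad : gradient J θ = c • g) :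
    J θ - J θstar ≤
      α / (2 * c) * ‖gradient J θ‖ ^ 2 +
        c / (2 * α) * (‖θ - θstar‖ ^ 2 - ‖proj (θ - α • g) - θstar'‖ ^ 2) +
        c / (2 * α) * (‖θstar' - θstar‖ ^ 2 +
          2 * ‖θstar' - θstar‖ * ‖proj (θ - α • g) - θstar‖) := by
  set p := proj (θ - α • g) with hp
  set ε := ‖θstar' - θstar‖ with hε
  -- Step A: convexity
  have hA : J θ - J θstar ≤ inner ℝ (gradient J θ) (θ - θstar) := by
    have := convex_grad_ineq J hJconv hJdiff θ θstar
    have hneg : (θstar - θ) = -(θ - θstar) := by abel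
    rw [hneg, inner_neg_right] at this
    linarith
  -- gradient norm
  have hGnorm : ‖gradient J θ‖ ^ 2 = c ^ 2 * ‖g‖ ^ 2 := by
    rw [hgrad, norm_smul]
    simp [abs_of_pos hc, mul_pow]
  have hGinner : (inner ℝ (gradient J θ) (θ - θstar) : ℝ) = c * inner ℝ g (θ - θstar) := by
    rw [hgrad, real_inner_smul_left]
  -- Step C: expansion
  have hC : ‖θ - α • g - θstar‖ ^ 2
      = ‖θ - θstar‖ ^ 2 - 2 * α * inner ℝ g (θ - θstar) + α ^ 2 * ‖g‖ ^ 2 := by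
    have h1 : θ - α • g - θstar = (θ - θstar) - α • g := by abel
    rw [h1, norm_sub_sq_real, real_inner_smul_right, norm_smul, real_inner_comm]
    simp [abs_of_pos hα, mul_pow]
    ring
  -- Step D: firm projection
  have hD : ‖p - θstar‖ ≤ ‖θ - α • g - θstar‖ :=
    proj_firm Θ hconv proj hproj (θ - α • g) θstar hθstar
  -- Step E: triangle
  have hE : ‖p - θstar'‖ ≤ ‖p - θstar‖ + ε := by
    have : p - θstar' = (p - θstar) - (θstar' - θstar) := by abel
    rw [this]
    exact norm_sub_le _ _
  have hE2 : ‖p - θstar'‖ ^ 2 ≤ ‖p - θstar‖ ^ 2 + 2 * ε * ‖p - θstar‖ + ε ^ 2 := by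
    nlinarith [norm_nonneg (p - θstar'), norm_nonneg (p - θstar), norm_nonneg (θstar' - θstar)]
  have hD2 : ‖p - θstar‖ ^ 2 ≤ ‖θ - α • g - θstar‖ ^ 2 := by
    nlinarith [norm_nonneg (p - θstar), norm_nonneg (θ - α • g - θstar)]
  have hac : α / (2 * c) * (c ^ 2 * ‖g‖ ^ 2) = c / (2 * α) * (α ^ 2 * ‖g‖ ^ 2) := by
    field_simp
  rw [hGnorm]
  have hkey : c / (2 * α) * (‖θ - θstar‖ ^ 2 - ‖θ - α • g - θstar‖ ^ 2 + α ^ 2 * ‖g‖ ^ 2)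
      = c * inner ℝ g (θ - θstar) := by
    rw [hC]
    field_simp
    ring
  have hmono : c / (2 * α) * (‖θ - θstar‖ ^ 2 - ‖p - θstar'‖ ^ 2 + ε ^ 2 + 2 * ε * ‖p - θstar‖)
      ≥ c / (2 * α) * (‖θ - θstar‖ ^ 2 - ‖θ - α • g - θstar‖ ^ 2) := by
    apply mul_le_mul_of_nonneg_left _ (by positivity)
    nlinarith
  calc J θ - J θstar ≤ inner ℝ (gradient J θ) (θ - θstar) := hA
    _ = c * inner ℝ g (θ - θstar) := hGinner
    _ = c / (2 * α) * (‖θ - θstar‖ ^ 2 - ‖θ - α • g - θstar‖ ^ 2 + α ^ 2 * ‖g‖ ^ 2) := hkey.symm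
    _ ≤ α / (2 * c) * (c ^ 2 * ‖g‖ ^ 2) +
        c / (2 * α) * (‖θ - θstar‖ ^ 2 - ‖p - θstar'‖ ^ 2) +
        c / (2 * α) * (ε ^ 2 + 2 * ε * ‖p - θstar‖) := by
      rw [hac]
      have e1 : c / (2 * α) * (‖θ - θstar‖ ^ 2 - ‖θ - α • g - θstar‖ ^ 2 + α ^ 2 * ‖g‖ ^ 2)
          = c / (2 * α) * (‖θ - θstar‖ ^ 2 - ‖θ - α • g - θstar‖ ^ 2)
            + c / (2 * α) * (α ^ 2 * ‖g‖ ^ 2) := by ring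
      have e2 : c / (2 * α) * (‖θ - θstar‖ ^ 2 - ‖p - θstar'‖ ^ 2)
            + c / (2 * α) * (ε ^ 2 + 2 * ε * ‖p - θstar‖)
          = c / (2 * α) * (‖θ - θstar‖ ^ 2 - ‖p - θstar'‖ ^ 2 + ε ^ 2 + 2 * ε * ‖p - θstar‖) := by
        ring
      linarith
end

section
/- Suppose that for every t ∈ ℕ the iterate satisfies θ_{t+1} = proj_Θ(θ_t − α_t g_t) with θ_0 ∈ Θ, where α_t > 0, c_t > 0, and ∇J_t(θ_t) = c_t g_t. Then for every t_f ∈ ℕ, writing ε_t = ‖θ*_{t+1} − θ*_t‖, the regret satisfies ∑_{t=0}^{t_f} (J_t(θ_t) − J_t(θ*_t)) ≤ (1/2) ∑_{t=0}^{t_f} (α_t/c_t) ‖∇J_t(θ_t)‖² + (c_0/(2α_0)) D² + D² ∑_{t=0}^{t_f} max(c_{t+1}/(2α_{t+1}) − c_t/(2α_t), 0) + (3D/2) ∑_{t=0}^{t_f} (c_t/α_t) ε_t. -/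
set_option maxHeartbeats 1000000

open RealInnerProductSpace

lemma grad_ineq {m : ℕ} {f : EuclideanSpace ℝ (Fin m) → ℝ}
    (hconv : ConvexOn ℝ Set.univ f) (hdiff : Differentiable ℝ f)
    (x y : EuclideanSpace ℝ (Fin m)) :
    f x + ⟪gradient f x, y - x⟫ ≤ f y := by
  set φ : ℝ → ℝ := f ∘ (AffineMap.lineMap x y) with hφ
  have hφconv : ConvexOn ℝ Set.univ φ := by
    have h := hconv.comp_affineMap (AffineMap.lineMap x y : ℝ →ᵃ[ℝ] EuclideanSpace ℝ (Fin m))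
    simpa using h
  have hline : HasDerivAt (fun s : ℝ => (AffineMap.lineMap x y : ℝ →ᵃ[ℝ] _) s) (y - x) 0 := by
    have : (fun s : ℝ => (AffineMap.lineMap x y : ℝ →ᵃ[ℝ] _) s)
        = fun s : ℝ => s • (y - x) + x := by
      funext s; simp [AffineMap.lineMap_apply]
    rw [this]
    simpa using ((hasDerivAt_id (0:ℝ)).smul_const (y - x)).add_const x
  have hf : HasFDerivAt f (InnerProductSpace.toDual ℝ _ (gradient f x)) x :=
    (hdiff x).hasGradientAt
  have hcomp : HasDerivAt φ (⟪gradient f x, y - x⟫) 0 := by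
    have h0 : (AffineMap.lineMap x y : ℝ →ᵃ[ℝ] _) (0:ℝ) = x := by simp
    have := (h0 ▸ hf : HasFDerivAt f _ ((AffineMap.lineMap x y : ℝ →ᵃ[ℝ] _) (0:ℝ))).comp_hasDerivAt 0 hline
    simpa [InnerProductSpace.toDual_apply_apply] using this
  have hs := hφconv.le_slope_of_hasDerivAt (Set.mem_univ (0:ℝ)) (Set.mem_univ (1:ℝ)) zero_lt_one hcomp
  have hφ0 : φ 0 = f x := by simp [hφ]
  have hφ1 : φ 1 = f y := by simp [hφ]
  have hsl : slope φ 0 1 = f y - f x := by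
    rw [slope_def_field, hφ0, hφ1]; simp only [sub_zero, div_one]
  rw [hsl] at hs
  linarith

lemma proj_sq {m : ℕ} {Θ : Set (EuclideanSpace ℝ (Fin m))}
    (hconv : Convex ℝ Θ)
    (proj : EuclideanSpace ℝ (Fin m) → EuclideanSpace ℝ (Fin m))
    (hproj : ∀ x, proj x ∈ Θ ∧ ∀ y ∈ Θ, dist x (proj x) ≤ dist x y)
    (x : EuclideanSpace ℝ (Fin m)) {y : EuclideanSpace ℝ (Fin m)} (hy : y ∈ Θ) :
    ‖proj x - y‖ ^ 2 ≤ ‖x - y‖ ^ 2 := by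
  haveI : Nonempty Θ := ⟨⟨y, hy⟩⟩
  have hval : ‖x - proj x‖ = ⨅ w : Θ, ‖x - (w : EuclideanSpace ℝ (Fin m))‖ := by
    apply le_antisymm
    · exact le_ciInf fun w => by simpa [dist_eq_norm] using (hproj x).2 w w.2
    · have hb : BddBelow (Set.range fun w : Θ => ‖x - (w : EuclideanSpace ℝ (Fin m))‖) :=
        ⟨0, fun _ ⟨_, h⟩ => h ▸ norm_nonneg _⟩
      exact ciInf_le hb (⟨proj x, (hproj x).1⟩ : Θ)
  have hinner := (norm_eq_iInf_iff_real_inner_le_zero hconv (hproj x).1).mp hval y hy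
  have hexp := norm_add_sq_real (x - proj x) (proj x - y)
  have h1 : (x - proj x) + (proj x - y) = x - y := by abel
  rw [h1] at hexp
  have h2 : ⟪x - proj x, proj x - y⟫ = - ⟪x - proj x, y - proj x⟫ := by
    rw [← inner_neg_right]; congr 1; abel
  nlinarith [sq_nonneg ‖x - proj x‖]

/-- General regret decomposition for online projected gradient
descent with positive step sizes and positive gradient scalings. -/
theorem regret_decomposition {m : ℕ}
    (Θ : Set (EuclideanSpace ℝ (Fin m)))
    (hne : Θ.Nonempty) (hcl : IsClosed Θ) (hconv : Convex ℝ Θ)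
    (hbd : Bornology.IsBounded Θ)
    (proj : EuclideanSpace ℝ (Fin m) → EuclideanSpace ℝ (Fin m))
    (hproj : ∀ x, proj x ∈ Θ ∧ ∀ y ∈ Θ, dist x (proj x) ≤ dist x y)
    (J : ℕ → EuclideanSpace ℝ (Fin m) → ℝ)
    (hJconv : ∀ t, ConvexOn ℝ Set.univ (J t))
    (hJdiff : ∀ t, Differentiable ℝ (J t))
    (θstar : ℕ → EuclideanSpace ℝ (Fin m))
    (hθstar : ∀ t, θstar t ∈ Θ ∧ ∀ y ∈ Θ, J t (θstar t) ≤ J t y)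
    (θ g : ℕ → EuclideanSpace ℝ (Fin m)) (c α : ℕ → ℝ)
    (hα : ∀ t : ℕ, 0 < α t) (hc : ∀ t : ℕ, 0 < c t)
    (hθ0 : θ 0 ∈ Θ)
    (hstep : ∀ t : ℕ, θ (t+1) = proj (θ t - α t • g t))
    (hgrad : ∀ t : ℕ, gradient (J t) (θ t) = c t • g t)
    (tf : ℕ) :
    ∑ t ∈ Finset.range (tf+1), (J t (θ t) - J t (θstar t)) ≤
      (1/2) * ∑ t ∈ Finset.range (tf+1),
          (α t / c t) * ‖gradient (J t) (θ t)‖ ^ 2 +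
        (c 0 / (2 * α 0)) * Metric.diam Θ ^ 2 +
        Metric.diam Θ ^ 2 * ∑ t ∈ Finset.range (tf+1),
          max (c (t+1) / (2 * α (t+1)) - c t / (2 * α t)) 0 +
        (3 * Metric.diam Θ / 2) * ∑ t ∈ Finset.range (tf+1),
          (c t / α t) * ‖θstar (t+1) - θstar t‖ := by
  set D := Metric.diam Θ with hD
  have hD0 : 0 ≤ D := Metric.diam_nonneg
  have hdiam : ∀ x ∈ Θ, ∀ y ∈ Θ, ‖x - y‖ ≤ D := by
    intro x hx y hy
    rw [← dist_eq_norm]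
    exact Metric.dist_le_diam_of_mem hbd hx hy
  have hθΘ : ∀ t, θ t ∈ Θ := by
    intro t
    induction t with
    | zero => exact hθ0
    | succ t _ => rw [hstep t]; exact (hproj _).1
  set A : ℕ → ℝ := fun t => ‖θ t - θstar t‖ ^ 2 with hA
  have hAt : ∀ t, A t = ‖θ t - θstar t‖ ^ 2 := fun t => rfl
  have hAD : ∀ t, A t ≤ D ^ 2 := by
    intro t
    rw [hAt]
    have := hdiam _ (hθΘ t) _ (hθstar t).1
    have h0 : (0:ℝ) ≤ ‖θ t - θstar t‖ := norm_nonneg _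
    nlinarith
  have hA0 : ∀ t, 0 ≤ A t := fun t => sq_nonneg _
  -- per-step key inequality
  have key : ∀ t, J t (θ t) - J t (θstar t) ≤
      c t / (2 * α t) * (A t - A (t+1)) +
      (1/2) * ((α t / c t) * ‖gradient (J t) (θ t)‖ ^ 2) +
      (3 * D / 2) * ((c t / α t) * ‖θstar (t+1) - θstar t‖) := by
    intro t
    have hαt := hα t; have hct := hc t
    set ε := ‖θstar (t+1) - θstar t‖ with hε
    have hε0 : 0 ≤ ε := norm_nonneg _
    have hεD : ε ≤ D := hdiam _ (hθstar (t+1)).1 _ (hθstar t).1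
    -- convexity
    have hJ : J t (θ t) - J t (θstar t) ≤ c t * ⟪g t, θ t - θstar t⟫ := by
      have h := grad_ineq (hJconv t) (hJdiff t) (θ t) (θstar t)
      rw [hgrad t] at h
      have h2 : ⟪c t • g t, θstar t - θ t⟫ = - (c t * ⟪g t, θ t - θstar t⟫) := by
        rw [show θstar t - θ t = -(θ t - θstar t) by abel, inner_neg_right,
          real_inner_smul_left]
      rw [h2] at h
      linarith
    -- projection step
    have hBD : ‖θ (t+1) - θstar t‖ ≤ D := hdiam _ (hθΘ (t+1)) _ (hθstar t).1
    have hB0 : (0:ℝ) ≤ ‖θ (t+1) - θstar t‖ := norm_nonneg _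
    have hproj2 : ‖θ (t+1) - θstar t‖ ^ 2 ≤
        A t - 2 * α t * ⟪g t, θ t - θstar t⟫ + α t ^ 2 * ‖g t‖ ^ 2 := by
      have h1 : ‖θ (t+1) - θstar t‖ ^ 2 ≤ ‖(θ t - α t • g t) - θstar t‖ ^ 2 := by
        rw [hstep t]
        exact proj_sq hconv proj hproj _ (hθstar t).1
      have h2 : (θ t - α t • g t) - θstar t = (θ t - θstar t) - α t • g t := by abel
      have hrhs : ‖(θ t - θstar t) - α t • g t‖ ^ 2 =
          A t - 2 * α t * ⟪g t, θ t - θstar t⟫ + α t ^ 2 * ‖g t‖ ^ 2 := by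
        rw [hAt, norm_sub_sq_real, real_inner_smul_right, norm_smul,
          real_inner_comm (θ t - θstar t) (g t), Real.norm_eq_abs, mul_pow, sq_abs]
        ring
      rw [h2, hrhs] at h1
      exact h1
    -- comparator drift
    have hdrift : A (t+1) ≤ ‖θ (t+1) - θstar t‖ ^ 2 + 3 * D * ε := by
      have htri : ‖θ (t+1) - θstar (t+1)‖ ≤ ‖θ (t+1) - θstar t‖ + ε := by
        have : θ (t+1) - θstar (t+1) = (θ (t+1) - θstar t) + (θstar t - θstar (t+1)) := by abel
        rw [this]
        have := norm_add_le (θ (t+1) - θstar t) (θstar t - θstar (t+1))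
        have hsym : ‖θstar t - θstar (t+1)‖ = ε := by rw [hε, norm_sub_rev]
        linarith
      have hn0 : (0:ℝ) ≤ ‖θ (t+1) - θstar (t+1)‖ := norm_nonneg _
      have hsq : ‖θ (t+1) - θstar (t+1)‖ ^ 2 ≤ (‖θ (t+1) - θstar t‖ + ε) ^ 2 := by
        nlinarith
      rw [hAt]
      nlinarith [hsq, mul_le_mul_of_nonneg_right hBD hε0, mul_le_mul_of_nonneg_right hεD hε0]
    -- gradient norm
    have hgn : ‖gradient (J t) (θ t)‖ ^ 2 = c t ^ 2 * ‖g t‖ ^ 2 := by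
      rw [hgrad t, norm_smul, mul_pow, Real.norm_eq_abs, sq_abs]
    have h2a : (0:ℝ) < 2 * α t := by linarith
    have key' : 2 * α t * (J t (θ t) - J t (θstar t)) ≤
        c t * (A t - A (t+1)) + α t ^ 2 * c t * ‖g t‖ ^ 2 + 3 * D * c t * ε := by
      nlinarith [mul_le_mul_of_nonneg_left hJ h2a.le,
        mul_le_mul_of_nonneg_left hproj2 hct.le,
        mul_le_mul_of_nonneg_left hdrift hct.le]
    have hRHS : c t / (2 * α t) * (A t - A (t+1)) +
        (1/2) * ((α t / c t) * ‖gradient (J t) (θ t)‖ ^ 2) +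
        (3 * D / 2) * ((c t / α t) * ε) =
        (c t * (A t - A (t+1)) + α t ^ 2 * c t * ‖g t‖ ^ 2 + 3 * D * c t * ε) / (2 * α t) := by
      rw [hgn]
      field_simp
    rw [hRHS, le_div_iff₀ h2a]
    linarith [key']
  -- shift inequality for varying coefficients
  have hshift : ∀ T, c (T+1) / (2 * α (T+1)) * A (T+1) ≤
      c T / (2 * α T) * A (T+1) + max (c (T+1) / (2 * α (T+1)) - c T / (2 * α T)) 0 * D ^ 2 := by
    intro T
    rcases le_or_gt (c (T+1) / (2 * α (T+1)) - c T / (2 * α T)) 0 with h | h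
    · have h1 : (c (T+1) / (2 * α (T+1)) - c T / (2 * α T)) * A (T+1) ≤ 0 :=
        mul_nonpos_of_nonpos_of_nonneg h (hA0 _)
      have h2 : (0:ℝ) ≤ max (c (T+1) / (2 * α (T+1)) - c T / (2 * α T)) 0 * D ^ 2 :=
        mul_nonneg (le_max_right _ _) (sq_nonneg _)
      linarith
    · have hm : max (c (T+1) / (2 * α (T+1)) - c T / (2 * α T)) 0 =
          c (T+1) / (2 * α (T+1)) - c T / (2 * α T) := max_eq_left h.le
      have h1 : (c (T+1) / (2 * α (T+1)) - c T / (2 * α T)) * A (T+1) ≤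
          (c (T+1) / (2 * α (T+1)) - c T / (2 * α T)) * D ^ 2 :=
        mul_le_mul_of_nonneg_left (hAD _) h.le
      rw [hm]
      linarith
  -- main induction
  have main : ∀ T : ℕ, ∑ t ∈ Finset.range (T+1), (J t (θ t) - J t (θstar t)) +
      c T / (2 * α T) * A (T+1) ≤
      (1/2) * ∑ t ∈ Finset.range (T+1), (α t / c t) * ‖gradient (J t) (θ t)‖ ^ 2 +
        (c 0 / (2 * α 0)) * D ^ 2 +
        D ^ 2 * ∑ t ∈ Finset.range T, max (c (t+1) / (2 * α (t+1)) - c t / (2 * α t)) 0 +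
        (3 * D / 2) * ∑ t ∈ Finset.range (T+1), (c t / α t) * ‖θstar (t+1) - θstar t‖ := by
    intro T
    induction T with
    | zero =>
      simp only [zero_add, Finset.sum_range_one, Finset.range_zero, Finset.sum_empty, mul_zero]
      have hk := key 0
      have hc0 : 0 ≤ c 0 / (2 * α 0) := div_nonneg (hc 0).le (by linarith [hα 0])
      have h1 : c 0 / (2 * α 0) * A 0 ≤ c 0 / (2 * α 0) * D ^ 2 :=
        mul_le_mul_of_nonneg_left (hAD 0) hc0
      linarith
    | succ T ih =>
      rw [Finset.sum_range_succ, Finset.sum_range_succ (f := fun t => (α t / c t) * ‖gradient (J t) (θ t)‖ ^ 2),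
        Finset.sum_range_succ (f := fun t => max (c (t+1) / (2 * α (t+1)) - c t / (2 * α t)) 0),
        Finset.sum_range_succ (f := fun t => (c t / α t) * ‖θstar (t+1) - θstar t‖)]
      have hk := key (T+1)
      have hs := hshift T
      linarith
  have hfinal := main tf
  have hnn : 0 ≤ c tf / (2 * α tf) * A (tf+1) :=
    mul_nonneg (div_nonneg (hc tf).le (by linarith [hα tf])) (hA0 _)
  have hmax : D ^ 2 * ∑ t ∈ Finset.range tf, max (c (t+1) / (2 * α (t+1)) - c t / (2 * α t)) 0 ≤
      D ^ 2 * ∑ t ∈ Finset.range (tf+1), max (c (t+1) / (2 * α (t+1)) - c t / (2 * α t)) 0 := by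
    apply mul_le_mul_of_nonneg_left _ (sq_nonneg D)
    exact Finset.sum_le_sum_of_subset_of_nonneg
      (Finset.range_subset_range.2 (Nat.le_succ _))
      (fun i _ _ => le_max_right _ _)
  linarith
end
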